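/- Let n ≥ 3 and let u be a word in x_1,...,x_n in which every variable occurs exactly twice, such that u[x_1,x_2,x_3] = (x_2 x_3 x_1)(x_2 x_1 x_3), and: for each odd 1 ≤ i < n, u[x_i,x_{i+1}] = x_{i+1} x_i x_{i+1} x_i; for each even 2 ≤ i < n, u[x_i,x_{i+1}] = x_i x_{i+1} x_i x_{i+1}; and for each 1 ≤ i < j ≤ n with j−i ∈ {2,3}, u[x_i,x_j] ∈ {x_j x_i² x_j, x_i x_j² x_i}. Then u equals the maelstrom word M_n. -/

import Mathlib

/-- The maelstrom words: `M 1 = x₁²`; if `k` is odd and `M k = m · xₖ` then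
`M (k+1) = x_{k+1} · m · x_{k+1} · xₖ`; if `k` is even and `M k = xₖ · m'` then
`M (k+1) = xₖ · x_{k+1} · m' · x_{k+1}`. -/
def maelW : ℕ → List ℕ
  | 0 => []
  | 1 => [1, 1]
  | (k+2) =>
    if (k+1) % 2 = 1 then (k+2) :: ((maelW (k+1)).dropLast ++ [k+2, k+1])
    else (k+1) :: (k+2) :: ((maelW (k+1)).tail ++ [k+2])

/-- Projection of a word to the two variables `i`, `j` (deleting all other letters). -/
def proj2 (u : List ℕ) (i j : ℕ) : List ℕ := u.filter (fun a => a == i || a == j)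

/-!
Induction on `n`. Deleting both copies of the letter `n + 1` from `u` leaves a word satisfying
the hypotheses for `n`, hence equal to `M n`. For odd `n` the word `M n` has the form
`(n-1) n ⋯ (n-1) (n-2) n`, and for even `n` its reversal does; all hypotheses are invariant
under reversal, since the patterns for `n - 1` and `n - 2` are palindromes. Counting the
letters `n`, `n - 1`, `n - 2` before the first and after the second copy of `n + 1` then puts
the first copy at the very front and the second one just before the final `n`, which is
`M (n + 1)` (or its reversal).
-/

namespace List

variable {α : Type*}

theorem append_cons_inj_of_notMem_left {c : α} {l₁ l₂ r₁ r₂ : List α} (h₁ : c ∉ l₁)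
    (h₂ : c ∉ l₂) (h : l₁ ++ c :: r₁ = l₂ ++ c :: r₂) : l₁ = l₂ ∧ r₁ = r₂ := by
  induction l₁ generalizing l₂ with
  | nil =>
    cases l₂ with
    | nil => simpa using h
    | cons b t => exact absurd (mem_cons.mpr (.inl (cons.inj h).1)) h₂
  | cons a s ih =>
    cases l₂ with
    | nil => exact absurd (mem_cons.mpr (.inl (cons.inj h).1.symm)) h₁
    | cons b t =>
      obtain ⟨rfl, ht⟩ := cons.inj h
      obtain ⟨rfl, rfl⟩ := ih (fun hc => h₁ (mem_cons_of_mem a hc))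
        (fun hc => h₂ (mem_cons_of_mem a hc)) ht
      exact ⟨rfl, rfl⟩

theorem exists_eq_append_cons_append_cons_of_count_eq_two [BEq α] [LawfulBEq α] {l : List α}
    {c : α} (h : l.count c = 2) :
    ∃ l₁ l₂ l₃, c ∉ l₁ ∧ c ∉ l₂ ∧ c ∉ l₃ ∧ l = l₁ ++ c :: l₂ ++ c :: l₃ := by
  obtain ⟨l₁, t, h₁, rfl, -⟩ := exists_erase_eq (count_pos_iff.mp (by omega : 0 < l.count c))
  have ht : t.count c = 1 := by simpa [count_append, count_eq_zero.mpr h₁] using h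
  obtain ⟨l₂, l₃, h₂, rfl, -⟩ := exists_erase_eq (count_pos_iff.mp (by omega : 0 < t.count c))
  have h₃ : l₃.count c = 0 := by simpa [count_append, count_eq_zero.mpr h₂] using ht
  exact ⟨l₁, l₂, l₃, h₁, h₂, count_eq_zero.mp h₃, by simp⟩

theorem prefix_cons_cons_cases {l r : List α} {a b : α} (h : l <+: a :: b :: r) :
    l = [] ∨ l = [a] ∨ ∃ t, l = a :: b :: t := by
  simp only [prefix_cons_iff] at h
  rcases h with rfl | ⟨t, rfl, rfl | ⟨s, rfl, -⟩⟩ <;> simp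

theorem suffix_append_triple_cases {l r : List α} {a b d : α} (h : l <:+ r ++ [a, b, d]) :
    l = [] ∨ l = [d] ∨ l = [b, d] ∨ ∃ t, l = t ++ [a, b, d] := by
  rw [← reverse_prefix] at h
  simp only [reverse_append, reverse_cons, reverse_nil, nil_append, cons_append,
    prefix_cons_iff, reverse_eq_nil_iff] at h
  rcases h with rfl | ⟨t, ht, rfl | ⟨t₁, rfl, rfl | ⟨s, rfl, -⟩⟩⟩
  · exact .inl rfl
  all_goals rw [reverse_eq_iff] at ht; subst ht
  exacts [.inr (.inl rfl), .inr (.inr (.inl rfl)), .inr (.inr (.inr ⟨s.reverse, by simp⟩))]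

theorem filter_filter_bne [BEq α] [LawfulBEq α] {p : α → Bool} {c : α} (hc : p c = false)
    (l : List α) : (l.filter (· != c)).filter p = l.filter p := by
  rw [filter_filter]
  exact filter_congr fun a _ => by by_cases h : a = c <;> simp_all

theorem filter_bne_append_cons_append_cons [BEq α] [LawfulBEq α] {c : α} {l₁ l₂ l₃ : List α}
    (h₁ : c ∉ l₁) (h₂ : c ∉ l₂) (h₃ : c ∉ l₃) :
    (l₁ ++ c :: l₂ ++ c :: l₃).filter (· != c) = l₁ ++ l₂ ++ l₃ := by
  have key (l : List α) (hl : c ∉ l) : l.filter (· != c) = l :=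
    filter_eq_self.mpr fun a ha => by simp [ne_of_mem_of_not_mem ha hl]
  simp [key _ h₁, key _ h₂, key _ h₃]

end List

open List

theorem proj2_append_cons_append_cons {l₁ l₂ l₃ : List ℕ} {i c : ℕ}
    (h₁ : c ∉ l₁) (h₂ : c ∉ l₂) (h₃ : c ∉ l₃) :
    proj2 (l₁ ++ c :: l₂ ++ c :: l₃) i c = replicate (l₁.count i) i ++
      c :: (replicate (l₂.count i) i ++ c :: replicate (l₃.count i) i) := by
  have key (l : List ℕ) (hl : c ∉ l) :
      l.filter (fun a => a == i || a == c) = replicate (l.count i) i := by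
    rw [← filter_beq]
    exact filter_congr fun a ha => by simp [ne_of_mem_of_not_mem ha hl]
  simp [proj2, key _ h₁, key _ h₂, key _ h₃]

theorem count_eq_of_proj2_eq_replicate {l₁ l₂ l₃ : List ℕ} {i c a b d : ℕ} (hi : i ≠ c)
    (h₁ : c ∉ l₁) (h₂ : c ∉ l₂) (h₃ : c ∉ l₃)
    (h : proj2 (l₁ ++ c :: l₂ ++ c :: l₃) i c =
      replicate a i ++ c :: (replicate b i ++ c :: replicate d i)) :
    l₁.count i = a ∧ l₂.count i = b ∧ l₃.count i = d := by
  rw [proj2_append_cons_append_cons h₁ h₂ h₃] at h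
  have hr (n : ℕ) : c ∉ replicate n i := by simp [hi.symm]
  obtain ⟨e₁, e⟩ := append_cons_inj_of_notMem_left (hr _) (hr _) h
  obtain ⟨e₂, e₃⟩ := append_cons_inj_of_notMem_left (hr _) (hr _) e
  simp only [replicate_inj] at e₁ e₂ e₃
  omega

theorem eq_nil_and_eq_singleton_of_proj2 {x y z c : ℕ} {w l₁ l₂ l₃ : List ℕ} (hxy : x ≠ y)
    (hxz : x ≠ z) (hyz : y ≠ z) (h₁ : c ∉ l₁) (h₂ : c ∉ l₂) (h₃ : c ∉ l₃)
    (hv : l₁ ++ l₂ ++ l₃ = y :: x :: w ++ [y, z, x])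
    (hx : proj2 (l₁ ++ c :: l₂ ++ c :: l₃) x c = [c, x, c, x])
    (hy : proj2 (l₁ ++ c :: l₂ ++ c :: l₃) y c = [c, y, y, c] ∨
      proj2 (l₁ ++ c :: l₂ ++ c :: l₃) y c = [y, c, c, y])
    (hz : proj2 (l₁ ++ c :: l₂ ++ c :: l₃) z c = [c, z, z, c] ∨
      proj2 (l₁ ++ c :: l₂ ++ c :: l₃) z c = [z, c, c, z]) :
    l₁ = [] ∧ l₃ = [x] := by
  have hc : ∀ a ∈ l₁ ++ l₂ ++ l₃, a ≠ c := by
    simp only [mem_append]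
    rintro a ((h | h) | h) rfl <;> contradiction
  have hcount (i : ℕ) (hi : i ∈ l₁ ++ l₂ ++ l₃)
      (h : proj2 (l₁ ++ c :: l₂ ++ c :: l₃) i c = [c, i, i, c] ∨
        proj2 (l₁ ++ c :: l₂ ++ c :: l₃) i c = [i, c, c, i]) :
      l₁.count i = 0 ∧ l₃.count i = 0 ∨ l₁.count i = 1 ∧ l₃.count i = 1 := by
    rcases h with h | h
    · obtain ⟨e₁, -, e₃⟩ := count_eq_of_proj2_eq_replicate (a := 0) (b := 2) (d := 0)
        (hc i hi) h₁ h₂ h₃ h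
      exact .inl ⟨e₁, e₃⟩
    · obtain ⟨e₁, -, e₃⟩ := count_eq_of_proj2_eq_replicate (a := 1) (b := 0) (d := 1)
        (hc i hi) h₁ h₂ h₃ h
      exact .inr ⟨e₁, e₃⟩
  obtain ⟨x₁, -, x₃⟩ := count_eq_of_proj2_eq_replicate (a := 0) (b := 1) (d := 1)
    (hc x (by simp [hv])) h₁ h₂ h₃ hx
  have hy' := hcount y (by simp [hv]) hy
  have hz' := hcount z (by simp [hv]) hz
  have hpre : l₁ <+: y :: x :: (w ++ [y, z, x]) := by
    rw [← cons_append, ← cons_append, ← hv, append_assoc]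
    exact prefix_append _ _
  have hsuf : l₃ <:+ y :: x :: w ++ [y, z, x] := hv ▸ suffix_append _ _
  -- the counts exclude every combination of prefix and suffix but `l₁ = []`, `l₃ = [x]`
  rcases prefix_cons_cons_cases hpre with rfl | rfl | ⟨t, rfl⟩ <;>
    rcases suffix_append_triple_cases hsuf with rfl | rfl | rfl | ⟨s, rfl⟩ <;>
    simp [count_append, hxy, hxz, hyz, hxy.symm, hxz.symm, hyz.symm] at x₁ x₃ hy' hz' ⊢

theorem proj2_reverse (u : List ℕ) (i j : ℕ) : proj2 u.reverse i j = (proj2 u i j).reverse :=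
  filter_reverse

theorem proj2_filter_bne {i j c : ℕ} (hi : i ≠ c) (hj : j ≠ c) (u : List ℕ) :
    proj2 (u.filter (· != c)) i j = proj2 u i j :=
  filter_filter_bne (by simp [hi.symm, hj.symm]) u

theorem maelW_succ_of_odd {n : ℕ} (hn : Odd n) :
    maelW (n + 1) = (n + 1) :: ((maelW n).dropLast ++ [n + 1, n]) := by
  obtain ⟨k, rfl⟩ := hn
  rw [maelW, if_pos (by omega)]

theorem maelW_succ_of_even {n : ℕ} (hn : Even n) (h0 : n ≠ 0) :
    maelW (n + 1) = n :: (n + 1) :: ((maelW n).tail ++ [n + 1]) := by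
  obtain ⟨k, rfl⟩ : ∃ k, n = k + 1 := Nat.exists_eq_succ_of_ne_zero h0
  rw [maelW, if_neg (by rw [Nat.even_iff] at hn; omega)]

def MaelShape (n : ℕ) (v : List ℕ) : Prop :=
  ∃ w, v = (n - 1) :: n :: w ++ [n - 1, n - 2, n]

theorem maelShape_maelW {n : ℕ} (hn : 3 ≤ n) :
    MaelShape n (if Even n then (maelW n).reverse else maelW n) := by
  induction n, hn using Nat.le_induction with
  | base => exact ⟨[1], rfl⟩
  | succ n hn ih =>
    obtain ⟨w, hw⟩ := ih
    refine ⟨(n - 2) :: (n - 1) :: w.reverse, ?_⟩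
    rw [show n + 1 - 1 = n by omega, show n + 1 - 2 = n - 1 by omega]
    rcases Nat.even_or_odd n with he | ho
    · rw [if_pos he, reverse_eq_iff] at hw
      rw [if_neg (Nat.not_even_iff_odd.mpr he.add_one), maelW_succ_of_even he (by omega), hw]
      simp
    · rw [if_neg (Nat.not_even_iff_odd.mpr ho)] at hw
      have hw' : maelW n = (n - 1) :: n :: w ++ [n - 1, n - 2] ++ [n] := by simp [hw]
      rw [if_pos ho.add_one, maelW_succ_of_odd ho, hw', dropLast_concat]
      simp

theorem eq_maelW_succ {n : ℕ} (hn : 3 ≤ n) {u : List ℕ} (hc : u.count (n + 1) = 2)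
    (hv : u.filter (· != n + 1) = maelW n)
    (hodd : Odd n → proj2 u n (n + 1) = [n + 1, n, n + 1, n])
    (heven : Even n → proj2 u n (n + 1) = [n, n + 1, n, n + 1])
    (hy : proj2 u (n - 1) (n + 1) = [n + 1, n - 1, n - 1, n + 1] ∨
      proj2 u (n - 1) (n + 1) = [n - 1, n + 1, n + 1, n - 1])
    (hz : proj2 u (n - 2) (n + 1) = [n + 1, n - 2, n - 2, n + 1] ∨
      proj2 u (n - 2) (n + 1) = [n - 2, n + 1, n + 1, n - 2]) :
    u = maelW (n + 1) := by
  obtain ⟨l₁, l₂, l₃, h₁, h₂, h₃, rfl⟩ := exists_eq_append_cons_append_cons_of_count_eq_two hc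
  rw [filter_bne_append_cons_append_cons h₁ h₂ h₃] at hv
  obtain ⟨w, hw⟩ := maelShape_maelW hn
  rcases Nat.even_or_odd n with he | ho
  · rw [if_pos he, ← hv] at hw
    have hrev : l₃.reverse ++ (n + 1) :: l₂.reverse ++ (n + 1) :: l₁.reverse =
        (l₁ ++ (n + 1) :: l₂ ++ (n + 1) :: l₃).reverse := by simp
    obtain ⟨e₃, e₁⟩ := eq_nil_and_eq_singleton_of_proj2 (x := n) (y := n - 1)
      (z := n - 2) (by omega) (by omega) (by omega) (mt mem_reverse.mp h₃)
      (mt mem_reverse.mp h₂) (mt mem_reverse.mp h₁) (by simpa using hw)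
      (by rw [hrev, proj2_reverse, heven he]; rfl)
      (by rw [hrev, proj2_reverse]; rcases hy with h | h <;> simp only [h] <;> simp)
      (by rw [hrev, proj2_reverse]; rcases hz with h | h <;> simp only [h] <;> simp)
    rw [reverse_eq_nil_iff] at e₃
    rw [reverse_eq_iff] at e₁
    subst e₁ e₃
    rw [maelW_succ_of_even he (by omega), ← hv]
    simp
  · rw [if_neg (Nat.not_even_iff_odd.mpr ho), ← hv] at hw
    obtain ⟨rfl, rfl⟩ := eq_nil_and_eq_singleton_of_proj2 (by omega) (by omega) (by omega)
      h₁ h₂ h₃ hw (hodd ho) hy hz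
    rw [maelW_succ_of_odd ho, ← hv]
    simp

/-- Implication (iii) → (iv) of Proposition 5.1: a word `u` in `x₁,…,xₙ` (`n ≥ 3`) in
which every variable occurs exactly twice, with `u[x₁,x₂,x₃] = (x₂x₃x₁)(x₂x₁x₃)`,
whose two-variable projections satisfy the stated conditions, equals the maelstrom
word `M n`. -/
theorem maelW_unique (n : ℕ) (hn : 3 ≤ n) (u : List ℕ)
    (hvars : ∀ a ∈ u, 1 ≤ a ∧ a ≤ n)
    (hocc : ∀ i : ℕ, 1 ≤ i → i ≤ n → u.count i = 2)
    (h123 : u.filter (fun a => a == 1 || a == 2 || a == 3) = [2, 3, 1, 2, 1, 3])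
    (hodd : ∀ i : ℕ, 1 ≤ i → i < n → Odd i → proj2 u i (i+1) = [i+1, i, i+1, i])
    (heven : ∀ i : ℕ, 2 ≤ i → i < n → Even i → proj2 u i (i+1) = [i, i+1, i, i+1])
    (h23 : ∀ i j : ℕ, 1 ≤ i → i < j → j ≤ n → (j - i = 2 ∨ j - i = 3) →
      proj2 u i j = [j, i, i, j] ∨ proj2 u i j = [i, j, j, i]) :
    u = maelW n := by
  induction n, hn using Nat.le_induction generalizing u with
  | base =>
    refine Eq.trans (filter_eq_self.mpr fun a ha => ?_).symm h123
    have := hvars a ha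
    simp only [Bool.or_eq_true, beq_iff_eq]
    omega
  | succ n hn ih =>
    have hv : u.filter (· != n + 1) = maelW n := by
      apply ih
      · intro a ha
        simp only [mem_filter, bne_iff_ne] at ha
        have := hvars a ha.1
        omega
      · intro i hi hin
        rw [count_filter (by simp only [bne_iff_ne, ne_eq]; omega)]
        exact hocc i hi (by omega)
      · rw [filter_filter_bne (p := fun a => a == 1 || a == 2 || a == 3) (by
          simp only [Nat.reduceBeqDiff, Bool.or_eq_false_iff, beq_eq_false_iff_ne]; omega)]
        exact h123
      · intro i hi hin ho
        rw [proj2_filter_bne (by omega) (by omega)]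
        exact hodd i hi (by omega) ho
      · intro i hi hin he
        rw [proj2_filter_bne (by omega) (by omega)]
        exact heven i hi (by omega) he
      · intro i j hi hij hj hd
        rw [proj2_filter_bne (by omega) (by omega)]
        exact h23 i j hi hij (by omega) hd
    exact eq_maelW_succ hn (hocc _ (by omega) le_rfl) hv
      (hodd n (by omega) (by omega)) (heven n (by omega) (by omega))
      (h23 _ _ (by omega) (by omega) le_rfl (by omega))
      (h23 _ _ (by omega) (by omega) le_rfl (by omega))
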